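/- Converse counting bound: fix finite nonempty alphabets 𝒴, 𝒳̂, a positive integer n, a type Q_Y of denominator n on 𝒴, and a joint type Q_{YX̂} of denominator n on 𝒴×𝒳̂ whose 𝒴-marginal is Q_Y. Let φ: T_n(Q_Y) → 𝒳̂^n be any map whose image has cardinality at most K. Then the set G* = { y^n ∈ T_n(Q_Y) : the joint empirical distribution of (y^n, φ(y^n)) equals Q_{YX̂} } satisfies |G*| ≤ min( |T_n(Q_Y)|, K·2^{n·H(Q_{Y|X̂}|Q_{X̂})} ), where H(Q_{Y|X̂}|Q_{X̂}) = H(Q_{YX̂}) − H(Q_{X̂}) is the conditional entropy. -/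

import Mathlib

open scoped BigOperators Classical
open Finset

noncomputable section

/-- `p` is a probability mass function on the finite alphabet `α`. -/
def IsPMF {α : Type*} [Fintype α] (p : α → ℝ) : Prop :=
  (∀ a, 0 ≤ p a) ∧ ∑ a, p a = 1

/-- `w` is a channel (a conditional pmf) from `α` to `β`. -/
def IsChannel {α β : Type*} [Fintype α] [Fintype β] (w : α → β → ℝ) : Prop :=
  ∀ a, IsPMF (w a)

/-- Kullback–Leibler divergence, base-2 logarithms, with the convention `0·log(0/q)=0`. -/
def klDiv {α : Type*} [Fintype α] (q p : α → ℝ) : ℝ :=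
  ∑ a, q a * Real.logb 2 (q a / p a)

/-- Shannon entropy, base-2 logarithms. -/
def entropy {α : Type*} [Fintype α] (q : α → ℝ) : ℝ :=
  -∑ a, q a * Real.logb 2 (q a)

/-- Mutual information of a joint pmf on `α × β`, base-2 logarithms. -/
def mutInfo {α β : Type*} [Fintype α] [Fintype β] (q : α × β → ℝ) : ℝ :=
  ∑ a, ∑ b, q (a, b) * Real.logb 2
    (q (a, b) / ((∑ b', q (a, b')) * (∑ a', q (a', b))))

/-- Conditional mutual information `I(X;Z|Y)` of a joint pmf on `X × Y × Z`,
base-2 logarithms. -/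
def condMutInfo {α β γ : Type*} [Fintype α] [Fintype β] [Fintype γ]
    (q : α × β × γ → ℝ) : ℝ :=
  ∑ x, ∑ y, ∑ z, q (x, y, z) * Real.logb 2
    ((q (x, y, z) * (∑ x', ∑ z', q (x', y, z'))) /
      ((∑ z', q (x, y, z')) * (∑ x', q (x', y, z))))

/-- Joint pmf `Q_{XYẐ} = Q_{XY}·Q_{Ẑ|XY}` built from `Q_{XY}` and a channel `W = Q_{Ẑ|XY}`. -/
def jointQ {α β γ : Type*} (Q : α × β → ℝ) (W : α × β → γ → ℝ) : α × β × γ → ℝ :=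
  fun p => Q (p.1, p.2.1) * W (p.1, p.2.1) p.2.2

/-- The `(Y, Ẑ)`-marginal of `jointQ Q W`. -/
def margYZ {α β γ : Type*} [Fintype α] (Q : α × β → ℝ) (W : α × β → γ → ℝ) :
    β × γ → ℝ :=
  fun p => ∑ x, Q (x, p.1) * W (x, p.1) p.2

/-- Expected distortion `E_Q[d(X, X̂)]` under the joint pmf `jointQ Q W`. -/
def expDist {α β γ : Type*} [Fintype α] [Fintype β] [Fintype γ]
    (Q : α × β → ℝ) (W : α × β → γ → ℝ) (d : α × γ → ℝ) : ℝ :=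
  ∑ x, ∑ y, ∑ z, Q (x, y) * W (x, y) z * d (x, z)

/-- `E(Q_{XY}, R, Δ)`: min over channels `Q_{X̂|XY}` with `E_Q[d(X,X̂)] ≤ Δ` of
`I_Q(X;X̂|Y) + |I_Q(Y;X̂) − R|⁺`. -/
def innerE {α β γ : Type*} [Fintype α] [Fintype β] [Fintype γ]
    (Q : α × β → ℝ) (d : α × γ → ℝ) (R Δ : ℝ) : ℝ :=
  sInf { e | ∃ W : α × β → γ → ℝ, IsChannel W ∧ expDist Q W d ≤ Δ ∧
    e = condMutInfo (jointQ Q W) + max (mutInfo (margYZ Q W) - R) 0 }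

/-- `E(R, Δ)`: min over pmfs `Q_{XY}` of `D(Q_{XY}‖P_{XY}) + E(Q_{XY},R,Δ)`. -/
def Eexp {α β γ : Type*} [Fintype α] [Fintype β] [Fintype γ]
    (P : α × β → ℝ) (d : α × γ → ℝ) (R Δ : ℝ) : ℝ :=
  sInf { e | ∃ Q : α × β → ℝ, IsPMF Q ∧ e = klDiv Q P + innerE Q d R Δ }

/-- `Δ_min`: min over functions `x̂ : 𝒴 → 𝒳̂` of `E[d(X, x̂(Y))]`. -/
def Dmin {α β γ : Type*} [Fintype α] [Fintype β] [Fintype γ]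
    (P : α × β → ℝ) (d : α × γ → ℝ) : ℝ :=
  sInf { e | ∃ φ : β → γ, e = ∑ x, ∑ y, P (x, y) * d (x, φ y) }

/-- The number of messages `⌊2^{nR}⌋` for a blocklength-`n` code of rate `R`. -/
def codeSize (R : ℝ) (n : ℕ) : ℕ := ⌊(2 : ℝ) ^ ((n : ℝ) * R)⌋₊

/-- The probability `P{d̄(X^n, g(f(Y^n))) ≤ Δ}` under the i.i.d. law `P_{XY}^n`. -/
def probSuccess {α β γ : Type*} [Fintype α] [Fintype β] [Fintype γ]
    (P : α × β → ℝ) (d : α × γ → ℝ) (Δ : ℝ) {n M : ℕ}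
    (f : (Fin n → β) → Fin M) (g : Fin M → Fin n → γ) : ℝ :=
  ∑ x : Fin n → α, ∑ y : Fin n → β,
    if (1 / (n : ℝ)) * ∑ i, d (x i, g (f y) i) ≤ Δ then ∏ i, P (x i, y i) else 0

/-- `p_c(n, R, Δ)`: the maximal correct-reconstruction probability over all
blocklength-`n` codes of rate `R`. -/
def pc {α β γ : Type*} [Fintype α] [Fintype β] [Fintype γ]
    (P : α × β → ℝ) (d : α × γ → ℝ) (R Δ : ℝ) (n : ℕ) : ℝ :=
  sSup { p | ∃ f : (Fin n → β) → Fin (codeSize R n),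
    ∃ g : Fin (codeSize R n) → Fin n → γ, p = probSuccess P d Δ f g }

/-- Conditional rate-distortion function `R_c(Q_{XY}, Δ)`. -/
def Rc {α β γ : Type*} [Fintype α] [Fintype β] [Fintype γ]
    (Q : α × β → ℝ) (d : α × γ → ℝ) (Δ : ℝ) : ℝ :=
  sInf { r | ∃ W : α × β → γ → ℝ, IsChannel W ∧ expDist Q W d ≤ Δ ∧
    r = condMutInfo (jointQ Q W) }

/-- Remote rate-distortion function `R_r(P_{XY}, Δ)`. -/
def Rr {α β γ : Type*} [Fintype α] [Fintype β] [Fintype γ]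
    (P : α × β → ℝ) (d : α × γ → ℝ) (Δ : ℝ) : ℝ :=
  sInf { r | ∃ W : β → γ → ℝ, IsChannel W ∧
    (∑ x, ∑ y, ∑ z, P (x, y) * W y z * d (x, z)) ≤ Δ ∧
    r = mutInfo (fun p : β × γ => (∑ x, P (x, p.1)) * W p.1 p.2) }

/-- Empirical distribution (type) of a sequence. -/
def empDist {α : Type*} {n : ℕ} (y : Fin n → α) : α → ℝ :=
  fun a => ((Finset.univ.filter fun i => y i = a).card : ℝ) / n

/-- Joint empirical distribution (joint type) of a pair of sequences. -/
def empDist2 {α β : Type*} {n : ℕ} (y : Fin n → α) (z : Fin n → β) : α × β → ℝ :=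
  fun p => ((Finset.univ.filter fun i => y i = p.1 ∧ z i = p.2).card : ℝ) / n

end


/-!
Put `W = Q_{Y|X̂}`. For a fixed reconstruction `z`, the weights `∏ᵢ W(yᵢ | zᵢ)` sum to at most `1`
over all `y`, and each `y` whose joint type with `z` is `Q_{YX̂}` has weight exactly
`2^{-n H(Q_{Y|X̂}|Q_{X̂})}`; so at most `2^{n H(Q_{Y|X̂}|Q_{X̂})}` sequences `y` are mapped to `z`
with joint type `Q_{YX̂}`. Summing over the at most `K` reconstructions in the image of `φ`
gives the second bound, and `G* ⊆ T_n(Q_Y)` gives the first.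
-/

open Real

section SumProd

variable {ι α : Type*} [Fintype ι] [DecidableEq ι] [Fintype α]

theorem sum_prod_le_one {f : ι → α → ℝ} (hf : ∀ i a, 0 ≤ f i a) (hsum : ∀ i, ∑ a, f i a ≤ 1) :
    ∑ y : ι → α, ∏ i, f i (y i) ≤ 1 := by
  rw [← Fintype.prod_sum]
  exact prod_le_one (fun i _ => sum_nonneg fun a _ => hf i a) fun i _ => hsum i

end SumProd

theorem card_le_card_image_mul {ι κ : Type*} [DecidableEq κ] {s : Finset ι} (f : ι → κ) {E : ℝ}
    (hfiber : ∀ z ∈ s.image f, (#{y ∈ s | f y = z} : ℝ) ≤ E) :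
    (#s : ℝ) ≤ #(s.image f) * E := by
  calc (#s : ℝ) = ∑ z ∈ s.image f, (#{y ∈ s | f y = z} : ℝ) := by
        exact_mod_cast card_eq_sum_card_image f s
    _ ≤ #(s.image f) • E := sum_le_card_nsmul _ _ E hfiber
    _ = #(s.image f) * E := nsmul_eq_mul _ _

section JointType

variable {α β : Type*} {n : ℕ}

theorem sum_apply_eq_mul_sum_empDist2 [Fintype α] [Fintype β] (y : Fin n → α) (z : Fin n → β)
    (g : α × β → ℝ) : ∑ i, g (y i, z i) = n * ∑ p, empDist2 y z p * g p := by
  rcases n.eq_zero_or_pos with rfl | hn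
  · simp
  rw [← Finset.sum_fiberwise' univ (fun i => (y i, z i)), mul_sum]
  refine sum_congr rfl fun p _ => ?_
  rw [sum_const, nsmul_eq_mul, empDist2, ← mul_assoc, mul_div_cancel₀ _ (by positivity)]
  congr 3
  ext i
  simp [Prod.ext_iff]

theorem empDist2_pos (y : Fin n → α) (z : Fin n → β) (i : Fin n) :
    0 < empDist2 y z (y i, z i) := by
  have : 0 < n := i.pos
  have : 0 < #{j | y j = y i ∧ z j = z i} := card_pos.mpr ⟨i, by simp⟩
  unfold empDist2
  positivity

end JointType

section CondDist

variable {α β : Type*} [Fintype α] {Q : α × β → ℝ}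

/-- `Q_{Y|X̂}`; in a column `b` with `Q_{X̂}(b) = 0` it is identically `0`, hence only
sub-stochastic. -/
noncomputable def condDist (Q : α × β → ℝ) (p : α × β) : ℝ :=
  Q p / ∑ a, Q (a, p.2)

theorem condDist_nonneg (hQ : ∀ p, 0 ≤ Q p) (p : α × β) : 0 ≤ condDist Q p :=
  div_nonneg (hQ p) (sum_nonneg fun a _ => hQ (a, p.2))

theorem apply_le_sum_fst (hQ : ∀ p, 0 ≤ Q p) (p : α × β) : Q p ≤ ∑ a, Q (a, p.2) :=
  single_le_sum (f := fun a => Q (a, p.2)) (fun a _ => hQ (a, p.2)) (mem_univ p.1)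

theorem condDist_pos (hQ : ∀ p, 0 ≤ Q p) {p : α × β} (hp : 0 < Q p) : 0 < condDist Q p :=
  div_pos hp (hp.trans_le (apply_le_sum_fst hQ p))

theorem sum_condDist_le_one (hQ : ∀ p, 0 ≤ Q p) (b : β) : ∑ a, condDist Q (a, b) ≤ 1 := by
  simp only [condDist, ← sum_div]
  exact div_le_one_of_le₀ le_rfl (sum_nonneg fun a _ => hQ (a, b))

theorem sum_mul_logb_condDist [Fintype β] (hQ : ∀ p, 0 ≤ Q p) :
    ∑ p, Q p * logb 2 (condDist Q p) = -(entropy Q - entropy fun b => ∑ a, Q (a, b)) := by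
  have hsplit : ∀ p, Q p * logb 2 (condDist Q p)
      = Q p * logb 2 (Q p) - Q p * logb 2 (∑ a, Q (a, p.2)) := by
    intro p
    rcases (hQ p).eq_or_lt with hp | hp
    · simp [← hp]
    rw [condDist, logb_div hp.ne' (hp.trans_le (apply_le_sum_fst hQ p)).ne', mul_sub]
  have hmarg : ∑ p : α × β, Q p * logb 2 (∑ a, Q (a, p.2))
      = ∑ b, (∑ a, Q (a, b)) * logb 2 (∑ a, Q (a, b)) := by
    rw [Fintype.sum_prod_type_right]
    dsimp only
    exact sum_congr rfl fun b _ => (sum_mul ..).symm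
  rw [sum_congr rfl fun p _ => hsplit p, sum_sub_distrib, hmarg, entropy, entropy]
  ring

end CondDist

section TypeClassBound

variable {α β : Type*} [Fintype α] [Fintype β] {n : ℕ} {Q : α × β → ℝ}

theorem prod_condDist_of_empDist2_eq (hQ : ∀ p, 0 ≤ Q p) {y : Fin n → α} {z : Fin n → β}
    (hy : empDist2 y z = Q) :
    ∏ i, condDist Q (y i, z i) = 2 ^ (-(n * (entropy Q - entropy fun b => ∑ a, Q (a, b)))) := by
  have hpos : ∀ i, 0 < condDist Q (y i, z i) := fun i =>
    condDist_pos hQ (hy ▸ empDist2_pos y z i)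
  calc ∏ i, condDist Q (y i, z i) = ∏ i, (2 : ℝ) ^ logb 2 (condDist Q (y i, z i)) :=
        prod_congr rfl fun i _ => (rpow_logb two_pos (by norm_num) (hpos i)).symm
    _ = 2 ^ ∑ i, logb 2 (condDist Q (y i, z i)) := (rpow_sum_of_pos two_pos _ _).symm
    _ = _ := by
        rw [sum_apply_eq_mul_sum_empDist2 y z (fun p => logb 2 (condDist Q p)), hy,
          sum_mul_logb_condDist hQ, mul_neg]

theorem card_empDist2_eq_le (hQ : ∀ p, 0 ≤ Q p) (z : Fin n → β) :
    (#{y : Fin n → α | empDist2 y z = Q} : ℝ) ≤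
      2 ^ (n * (entropy Q - entropy fun b => ∑ a, Q (a, b))) := by
  set c := (n : ℝ) * (entropy Q - entropy fun b => ∑ a, Q (a, b))
  have hweight : (#{y : Fin n → α | empDist2 y z = Q} : ℝ) * 2 ^ (-c) ≤ 1 :=
    calc (#{y : Fin n → α | empDist2 y z = Q} : ℝ) * 2 ^ (-c)
        = ∑ y with empDist2 y z = Q, ∏ i, condDist Q (y i, z i) := by
          rw [sum_congr rfl fun y hy => prod_condDist_of_empDist2_eq hQ (mem_filter.mp hy).2,
            sum_const, nsmul_eq_mul]
      _ ≤ ∑ y : Fin n → α, ∏ i, condDist Q (y i, z i) :=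
          sum_le_sum_of_subset_of_nonneg (filter_subset _ _) fun y _ _ =>
            prod_nonneg fun i _ => condDist_nonneg hQ _
      _ ≤ 1 := sum_prod_le_one (fun i a => condDist_nonneg hQ _)
          fun i => sum_condDist_le_one hQ (z i)
  rwa [rpow_neg zero_le_two, ← div_eq_mul_inv, div_le_one (by positivity)] at hweight

end TypeClassBound

theorem converse_counting_bound_general
    (𝒴 𝒵 : Type) [Fintype 𝒴] [Fintype 𝒵]
    (n : ℕ)
    (QY : 𝒴 → ℝ)
    (Q : 𝒴 × 𝒵 → ℝ) (hQ : IsPMF Q)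
    (K : ℕ) (φ : (Fin n → 𝒴) → Fin n → 𝒵)
    (hK : ((Finset.univ.filter fun y : Fin n → 𝒴 => empDist y = QY).image φ).card ≤ K) :
    (((Finset.univ.filter fun y : Fin n → 𝒴 =>
        empDist y = QY ∧ empDist2 y (φ y) = Q).card : ℝ)) ≤
      min (((Finset.univ.filter fun y : Fin n → 𝒴 => empDist y = QY).card : ℝ))
        ((K : ℝ) * 2 ^ ((n : ℝ) * (entropy Q - entropy (fun b => ∑ a, Q (a, b))))) := by
  set T := Finset.univ.filter fun y : Fin n → 𝒴 => empDist y = QY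
  set G := Finset.univ.filter fun y : Fin n → 𝒴 => empDist y = QY ∧ empDist2 y (φ y) = Q
  have hGT : G ⊆ T := fun y hy => by
    simp only [G, T, mem_filter] at hy ⊢
    exact ⟨hy.1, hy.2.1⟩
  have hfiber : ∀ z ∈ G.image φ, (#{y ∈ G | φ y = z} : ℝ) ≤
      2 ^ ((n : ℝ) * (entropy Q - entropy fun b => ∑ a, Q (a, b))) := by
    intro z _
    refine le_trans ?_ (card_empDist2_eq_le hQ.1 z)
    gcongr
    intro y hy
    simp only [G, mem_filter] at hy ⊢
    exact ⟨mem_univ y, hy.2 ▸ hy.1.2.2⟩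
  have himage : (#(G.image φ) : ℝ) ≤ K := by
    exact_mod_cast (card_le_card (image_subset_image hGT)).trans hK
  refine le_min (by exact_mod_cast card_le_card hGT) ?_
  exact (card_le_card_image_mul φ hfiber).trans (by gcongr)

/-- **Converse counting bound** (eqs. (40)–(46) of the paper): for any map `φ` on the
type class `T_n(Q_Y)` whose image has at most `K` reconstruction sequences, the set of
`y^n ∈ T_n(Q_Y)` whose joint empirical distribution with `φ(y^n)` equals `Q_{YX̂}`
has size at most `min(|T_n(Q_Y)|, K·2^{nH(Q_{Y|X̂}|Q_{X̂})})`. -/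
theorem converse_counting_bound
    (𝒴 𝒵 : Type) [Fintype 𝒴] [Fintype 𝒵] [Nonempty 𝒴] [Nonempty 𝒵]
    (n : ℕ) (hn : 0 < n)
    (QY : 𝒴 → ℝ) (hQY : IsPMF QY) (hQYtype : ∀ a, ∃ k : ℕ, QY a = (k : ℝ) / n)
    (Q : 𝒴 × 𝒵 → ℝ) (hQ : IsPMF Q) (hQtype : ∀ p, ∃ k : ℕ, Q p = (k : ℝ) / n)
    (hmarg : ∀ a, ∑ b, Q (a, b) = QY a)
    (K : ℕ) (φ : (Fin n → 𝒴) → Fin n → 𝒵)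
    (hK : ((Finset.univ.filter fun y : Fin n → 𝒴 => empDist y = QY).image φ).card ≤ K) :
    (((Finset.univ.filter fun y : Fin n → 𝒴 =>
        empDist y = QY ∧ empDist2 y (φ y) = Q).card : ℝ)) ≤
      min (((Finset.univ.filter fun y : Fin n → 𝒴 => empDist y = QY).card : ℝ))
        ((K : ℝ) * 2 ^ ((n : ℝ) * (entropy Q - entropy (fun b => ∑ a, Q (a, b))))) :=
  converse_counting_bound_general 𝒴 𝒵 n QY Q hQ K φ hK
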